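/- arXiv:2404.10396 — 7 statements merged into one kernel-verified Lean document; each statement's English description precedes it below -/
import Mathlib

section
/- For any knot sequence, any degree m ≥ 1, any index i with −m ≤ i ≤ n−1, and every u ∈ ℝ that is not equal to any of the knots t_{−m}, …, t_{n+m}, the B-spline basis functions satisfy m·N_{m,i}(u) + (t_{m+i+1} − u)·N′_{m,i}(u) = m·(t_{m+i+1} − t_i)·N_{m−1,i}(u)/(t_{m+i} − t_i), where N′_{m,i} denotes the derivative of N_{m,i}, and where the right-hand side is taken to be 0 if t_{m+i} = t_i. -/
/-!
At a point that is not a knot, `N_{p,j}` has derivative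
`p/(t_{p+j} - t_j) N_{p-1,j} - p/(t_{p+j+1} - t_{j+1}) N_{p-1,j+1}`. This is proved by induction on
`p`, differentiating the de Boor–Cox recursion; after expanding `N_{p,j}` and `N_{p,j+1}` once more
by the recursion, the inductive step becomes an identity between knot ratios which holds because
the knots are nondecreasing. The theorem is then the recursion for `N_{m,i}` rearranged: the
`N_{m-1,i+1}` terms cancel and the `N_{m-1,i}` terms add up to
`m (t_{m+i+1} - t_i)/(t_{m+i} - t_i) N_{m-1,i}`.
-/

/-- The B-spline basis functions `N_{p,i}` of degree `p` over the knot
sequence `t`, defined by the de Boor–Cox recursion, with the conventions that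
a fraction with vanishing denominator is replaced by `0` (automatic for real
division in Lean) and that `N_{p,q} ≡ 0` whenever `q < -p` or `q ≥ n`. -/
noncomputable def bspline (t : ℤ → ℝ) (n : ℕ) : ℕ → ℤ → ℝ → ℝ
  | 0 => fun i u =>
      if 0 ≤ i ∧ i < (n : ℤ) ∧ t i ≤ u ∧ u < t (i + 1) then 1 else 0
  | p + 1 => fun i u =>
      if -((p : ℤ) + 1) ≤ i ∧ i < (n : ℤ) then
        (u - t i) / (t ((p : ℤ) + 1 + i) - t i) * bspline t n p i u
          + (t ((p : ℤ) + 1 + i + 1) - u) / (t ((p : ℤ) + 1 + i + 1) - t (i + 1))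
              * bspline t n p (i + 1) u
      else 0

noncomputable def bern (p k : ℕ) (x : ℝ) : ℝ :=
  (p.choose k : ℝ) * x ^ k * (1 - x) ^ (p - k)

open Filter Topology

theorem eventually_le_iff_le_of_ne {α : Type*} [LinearOrder α] [TopologicalSpace α]
    [OrderTopology α] {a x : α} (h : x ≠ a) : ∀ᶠ y in 𝓝 x, (a ≤ y ↔ a ≤ x) := by
  rcases h.lt_or_gt with h | h
  · filter_upwards [gt_mem_nhds h] with y hy
    exact iff_of_false hy.not_ge h.not_ge
  · filter_upwards [lt_mem_nhds h] with y hy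
    exact iff_of_true hy.le h.le

section

variable {t : ℤ → ℝ} {n : ℕ}

theorem bspline_eq_zero {p : ℕ} {j : ℤ} (h : j < -(p : ℤ) ∨ (n : ℤ) ≤ j) :
    bspline t n p j = 0 := by
  funext u
  cases p with
  | zero => simp only [bspline, Pi.zero_apply, ite_eq_right_iff]; omega
  | succ p => simp only [bspline, Pi.zero_apply, ite_eq_right_iff]; omega

-- Outside `-(p + 1) ≤ j < n`, where the definition does not apply the recursion, both sides vanish.
theorem bspline_succ (p : ℕ) (j : ℤ) (u : ℝ) :
    bspline t n (p + 1) j u =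
      (u - t j) / (t ((p : ℤ) + 1 + j) - t j) * bspline t n p j u
        + (t ((p : ℤ) + 1 + j + 1) - u) / (t ((p : ℤ) + 1 + j + 1) - t (j + 1))
            * bspline t n p (j + 1) u := by
  by_cases hj : -((p : ℤ) + 1) ≤ j ∧ j < (n : ℤ)
  · simp only [bspline, if_pos hj]
  · rw [bspline_eq_zero (by push_cast; omega), bspline_eq_zero (by omega),
      bspline_eq_zero (by omega)]
    simp

variable (t n) in
noncomputable def bsplineDeriv : ℕ → ℤ → ℝ → ℝ
  | 0 => fun _ _ => 0
  | p + 1 => fun j u =>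
      (p + 1) / (t ((p : ℤ) + 1 + j) - t j) * bspline t n p j u
        - (p + 1) / (t ((p : ℤ) + 1 + j + 1) - t (j + 1)) * bspline t n p (j + 1) u

theorem bsplineDeriv_succ (p : ℕ) (j : ℤ) (u : ℝ) :
    bsplineDeriv t n (p + 1) j u =
      (p + 1) / (t ((p : ℤ) + 1 + j) - t j) * bspline t n p j u
        - (p + 1) / (t ((p : ℤ) + 1 + j + 1) - t (j + 1)) * bspline t n p (j + 1) u :=
  rfl

theorem bsplineDeriv_eq_zero {p : ℕ} {j : ℤ} (h : j < -(p : ℤ) ∨ (n : ℤ) ≤ j) :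
    bsplineDeriv t n p j = 0 := by
  funext u
  cases p with
  | zero => rfl
  | succ p =>
    rw [Pi.zero_apply, bsplineDeriv_succ, bspline_eq_zero (by push_cast at h; omega), bspline_eq_zero (by push_cast at h; omega)]
    simp

theorem bsplineDeriv_combination {p : ℕ} {j : ℤ} (u : ℝ) (h₁ : t j ≤ t (j + 1))
    (h₂ : t (j + 1) ≤ t ((p : ℤ) + 1 + j)) (h₃ : t ((p : ℤ) + 1 + j) ≤ t ((p : ℤ) + 1 + j + 1)) :
    (u - t j) / (t ((p : ℤ) + 1 + j) - t j) * bsplineDeriv t n p j u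
        + (t ((p : ℤ) + 1 + j + 1) - u) / (t ((p : ℤ) + 1 + j + 1) - t (j + 1))
            * bsplineDeriv t n p (j + 1) u
      = p / (t ((p : ℤ) + 1 + j) - t j) * bspline t n p j u
          - p / (t ((p : ℤ) + 1 + j + 1) - t (j + 1)) * bspline t n p (j + 1) u := by
  cases p with
  | zero => simp [bsplineDeriv]
  | succ q =>
    simp only [bsplineDeriv_succ, bspline_succ q]
    push_cast at h₂ h₃ ⊢
    rw [show (q : ℤ) + 1 + (j + 1) = q + 1 + 1 + j by ring,
      show (q : ℤ) + 1 + j + 1 = q + 1 + 1 + j by ring]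
    set a := t j
    set b := t (j + 1)
    set d := t ((q : ℤ) + 1 + 1 + j)
    set e := t ((q : ℤ) + 1 + 1 + j + 1)
    -- the two sides differ by `(q + 1) N_{q,j+1}` times this expression
    have key : (d - b)⁻¹ * ((e - b) / (e - b) - (d - a) / (d - a)) = 0 := by
      rcases h₂.eq_or_lt with hbd | hbd
      · simp [hbd]
      · rw [div_self (by linarith), div_self (by linarith)]
        simp
    linear_combination ((q + 1) * bspline t n q (j + 1) u) * key

theorem hasDerivAt_bspline_zero {j : ℤ} {u : ℝ} (hj : u ≠ t j) (hj₁ : u ≠ t (j + 1)) :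
    HasDerivAt (bspline t n 0 j) 0 u := by
  refine (hasDerivAt_const u (bspline t n 0 j u)).congr_of_eventuallyEq ?_
  filter_upwards [eventually_le_iff_le_of_ne hj, eventually_le_iff_le_of_ne hj₁] with v hv hv₁
  simp only [bspline, lt_iff_not_ge, hv, hv₁]

theorem hasDerivAt_bspline_of_lt_or_le {p : ℕ} {j : ℤ} (h : j < -(p : ℤ) ∨ (n : ℤ) ≤ j) (u : ℝ) :
    HasDerivAt (bspline t n p j) (bsplineDeriv t n p j u) u := by
  rw [bspline_eq_zero h, bsplineDeriv_eq_zero h]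
  exact hasDerivAt_const u 0

theorem hasDerivAt_bspline {m : ℕ}
    (hmono : ∀ k l : ℤ, -(m : ℤ) ≤ k → k ≤ l → l ≤ (n : ℤ) + m → t k ≤ t l)
    {u : ℝ} (hu : ∀ k : ℤ, -(m : ℤ) ≤ k → k ≤ (n : ℤ) + m → u ≠ t k)
    {p : ℕ} (hp : p ≤ m) (j : ℤ) :
    HasDerivAt (bspline t n p j) (bsplineDeriv t n p j u) u := by
  induction p generalizing j with
  | zero =>
    by_cases hj : 0 ≤ j ∧ j < (n : ℤ)
    · exact hasDerivAt_bspline_zero (hu j (by omega) (by omega)) (hu (j + 1) (by omega) (by omega))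
    · exact hasDerivAt_bspline_of_lt_or_le (by omega) u
  | succ p ih =>
    by_cases hj : -((p : ℤ) + 1) ≤ j ∧ j < (n : ℤ)
    · rw [show bspline t n (p + 1) j = _ from funext (bspline_succ p j)]
      refine HasDerivAt.congr_deriv
        (((((hasDerivAt_id' u).sub_const (t j)).div_const _).mul (ih (by omega) j)).add
          ((((hasDerivAt_const u _).sub (hasDerivAt_id' u)).div_const _).mul
            (ih (by omega) (j + 1)))) ?_
      have hcomb := bsplineDeriv_combination (n := n) (p := p) (j := j) u
        (hmono _ _ (by omega) (by omega) (by omega)) (hmono _ _ (by omega) (by omega) (by omega))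
        (hmono _ _ (by omega) (by omega) (by omega))
      rw [bsplineDeriv_succ, Pi.sub_apply]
      linear_combination hcomb
    · exact hasDerivAt_bspline_of_lt_or_le (by push_cast; omega) u

end

theorem bspline_diff_rec_left_general
    (m n : ℕ) (t : ℤ → ℝ)
    (hmono : ∀ k l : ℤ, -(m : ℤ) ≤ k → k ≤ l → l ≤ (n : ℤ) + m → t k ≤ t l)
    (i : ℤ)
    (u : ℝ) (hu : ∀ k : ℤ, -(m : ℤ) ≤ k → k ≤ (n : ℤ) + m → u ≠ t k) :
    (m : ℝ) * bspline t n m i u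
        + (t ((m : ℤ) + i + 1) - u) * deriv (bspline t n m i) u
      = (m : ℝ) * (t ((m : ℤ) + i + 1) - t i)
          * (bspline t n (m - 1) i u / (t ((m : ℤ) + i) - t i)) := by
  rw [(hasDerivAt_bspline hmono hu le_rfl i).deriv]
  cases m with
  | zero => simp [bsplineDeriv]
  | succ p =>
    rw [bspline_succ, bsplineDeriv_succ, Nat.add_sub_cancel]
    push_cast
    ring

/-- `m·N_{m,i}(u) + (t_{m+i+1} − u)·N′_{m,i}(u)
      = m·(t_{m+i+1} − t_i)·N_{m−1,i}(u)/(t_{m+i} − t_i)`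
for every `u` which is not a knot (the right-hand side being `0` when
`t_{m+i} = t_i`, which is automatic for real division). -/
theorem bspline_diff_rec_left
    (m n : ℕ) (hm : 1 ≤ m) (hn : 1 ≤ n) (t : ℤ → ℝ)
    (hmono : ∀ k l : ℤ, -(m : ℤ) ≤ k → k ≤ l → l ≤ (n : ℤ) + m → t k ≤ t l)
    (h0n : t 0 < t n)
    (i : ℤ) (hi1 : -(m : ℤ) ≤ i) (hi2 : i ≤ (n : ℤ) - 1)
    (u : ℝ) (hu : ∀ k : ℤ, -(m : ℤ) ≤ k → k ≤ (n : ℤ) + m → u ≠ t k) :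
    (m : ℝ) * bspline t n m i u
        + (t ((m : ℤ) + i + 1) - u) * deriv (bspline t n m i) u
      = (m : ℝ) * (t ((m : ℤ) + i + 1) - t i)
          * (bspline t n (m - 1) i u / (t ((m : ℤ) + i) - t i)) :=
  bspline_diff_rec_left_general m n t hmono i u hu
end

section
/- Suppose no inner knot has multiplicity greater than m (m ≥ 1), fix j with 0 ≤ j ≤ n−1 such that t_j < t_{j+1}, and let i satisfy j − m < i < j. Then the adjusted Bernstein–Bézier coefficients of N_{m,i} and N_{m,i+1} over the knot span [t_j, t_{j+1}) satisfy, for every k = 0, 1, …, m−1: b_{m,k}^{(i,j)} = ((t_j − t_i)/(t_{j+1} − t_i))·b_{m,k+1}^{(i,j)} + (v_{mi}/(t_{j+1} − t_i))·( (t_{j+1} − t_{m+i+2})·b_{m,k}^{(i+1,j)} + (t_{m+i+2} − t_j)·b_{m,k+1}^{(i+1,j)} ), where v_{mi} = (t_{m+i+1} − t_i)/(t_{m+i+2} − t_{i+1}). -/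
/-!
On a knot span, `N_{m,l}` is a polynomial, and we apply to it the polar derivative
`D_a P = m P + (a - x) P'`. The de Boor–Cox recursion together with the derivative formula gives
`D_a N_{m,l} = m (α N_{m-1,l} + β N_{m-1,l+1})` with `α = (a - t_l)/(t_{l+m} - t_l)` and
`β = (t_{l+m+1} - a)/(t_{l+m+1} - t_{l+1})`, so `D_{t_i} N_{m,i}` and `D_{t_{m+i+2}} N_{m,i+1}` are
both multiples of `N_{m-1,i+1}`. In the Bernstein basis, the polar derivative at `a` of a Bézier
polynomial has as control points one de Casteljau step at `a` of the original ones; comparing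
Bernstein coefficients of the two proportional polar derivatives gives the recurrence.
-/

open Polynomial

namespace bernsteinPolynomial

variable {R : Type*} [CommRing R]

theorem succ_zero (q : ℕ) :
    bernsteinPolynomial R (q + 1) 0 = (1 - X) * bernsteinPolynomial R q 0 := by
  simp [bernsteinPolynomial, pow_succ, mul_comm]

theorem succ_succ (q k : ℕ) :
    bernsteinPolynomial R (q + 1) (k + 1)
      = X * bernsteinPolynomial R q k + (1 - X) * bernsteinPolynomial R q (k + 1) := by
  rcases lt_trichotomy k q with hkq | rfl | hqk
  · obtain ⟨r, rfl⟩ := Nat.exists_eq_add_of_lt hkq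
    simp only [bernsteinPolynomial, Nat.choose_succ_succ (k + r + 1),
      show k + r + 1 + 1 - (k + 1) = r + 1 by omega, show k + r + 1 - k = r + 1 by omega,
      show k + r + 1 - (k + 1) = r by omega]
    push_cast
    ring
  · simp [bernsteinPolynomial, pow_succ, mul_comm]
  · simp [eq_zero_of_lt R hqk, eq_zero_of_lt R (by omega : q + 1 < k + 1),
      eq_zero_of_lt R (by omega : q < k + 1)]

end bernsteinPolynomial

namespace Polynomial

variable {R : Type*} [CommRing R]

/-- Laguerre's polar derivative `D_a P = d P + (a - X) P'`, `d` standing for the degree of `P`. -/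
noncomputable def polarDerivative (d : ℕ) (a : R) : R[X] →ₗ[R] R[X] :=
  d • LinearMap.id + LinearMap.mulLeft R (C a - X) ∘ₗ derivative

theorem polarDerivative_apply (d : ℕ) (a : R) (P : R[X]) :
    polarDerivative d a P = (d : R[X]) * P + (C a - X) * derivative P := by
  simp [polarDerivative, nsmul_eq_mul]

theorem polarDerivative_eq_one_sub_smul_add_smul (d : ℕ) (a : R) :
    polarDerivative d a = (1 - a) • polarDerivative d 0 + a • polarDerivative d 1 := by
  refine LinearMap.ext fun P => ?_
  simp only [LinearMap.add_apply, LinearMap.smul_apply, polarDerivative_apply, smul_eq_C_mul,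
    map_sub, map_one, map_zero]
  ring

theorem polarDerivative_zero_bernsteinPolynomial (q k : ℕ) :
    polarDerivative (q + 1) (0 : R) (bernsteinPolynomial R (q + 1) k)
      = (q + 1 : R) • bernsteinPolynomial R q k := by
  rw [polarDerivative_apply, smul_eq_C_mul]
  cases k with
  | zero =>
    rw [bernsteinPolynomial.derivative_zero, bernsteinPolynomial.succ_zero]
    simp only [map_zero, map_add, map_natCast, map_one, Nat.cast_add, Nat.cast_one,
      add_tsub_cancel_right]
    ring
  | succ k =>
    rw [bernsteinPolynomial.derivative_succ, bernsteinPolynomial.succ_succ]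
    simp only [map_zero, map_add, map_natCast, map_one, Nat.cast_add, Nat.cast_one,
      add_tsub_cancel_right]
    ring

theorem polarDerivative_one_bernsteinPolynomial_zero (q : ℕ) :
    polarDerivative (q + 1) (1 : R) (bernsteinPolynomial R (q + 1) 0) = 0 := by
  rw [polarDerivative_apply, bernsteinPolynomial.derivative_zero, bernsteinPolynomial.succ_zero]
  simp only [map_one, Nat.cast_add, Nat.cast_one, add_tsub_cancel_right]
  ring

theorem polarDerivative_one_bernsteinPolynomial_succ (q k : ℕ) :
    polarDerivative (q + 1) (1 : R) (bernsteinPolynomial R (q + 1) (k + 1))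
      = (q + 1 : R) • bernsteinPolynomial R q k := by
  rw [polarDerivative_apply, smul_eq_C_mul, bernsteinPolynomial.derivative_succ,
    bernsteinPolynomial.succ_succ]
  simp only [map_add, map_natCast, map_one, Nat.cast_add, Nat.cast_one, add_tsub_cancel_right]
  ring

noncomputable def bezier (p : ℕ) (c : ℕ → R) : R[X] :=
  ∑ k ∈ Finset.range (p + 1), c k • bernsteinPolynomial R p k

theorem smul_bezier (p : ℕ) (a : R) (c : ℕ → R) : a • bezier p c = bezier p (a • c) := by
  simp [bezier, Finset.smul_sum, smul_smul]

theorem bezier_sub (p : ℕ) (c d : ℕ → R) : bezier p c - bezier p d = bezier p (c - d) := by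
  simp [bezier, sub_smul]

theorem eval_bezier (p : ℕ) (c : ℕ → ℝ) (x : ℝ) :
    (bezier p c).eval x = ∑ k ∈ Finset.range (p + 1), c k * bern p k x := by
  simp [bezier, eval_finsetSum, bernsteinPolynomial, bern, mul_assoc]

theorem polarDerivative_zero_bezier (q : ℕ) (c : ℕ → R) :
    polarDerivative (q + 1) (0 : R) (bezier (q + 1) c) = (q + 1 : R) • bezier q c := by
  simp only [bezier, map_sum, map_smul, polarDerivative_zero_bernsteinPolynomial, Finset.smul_sum]
  rw [Finset.sum_range_succ, bernsteinPolynomial.eq_zero_of_lt R (Nat.lt_succ_self q)]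
  simp only [smul_zero, add_zero, smul_comm (c _)]

theorem polarDerivative_one_bezier (q : ℕ) (c : ℕ → R) :
    polarDerivative (q + 1) (1 : R) (bezier (q + 1) c)
      = (q + 1 : R) • bezier q (fun k => c (k + 1)) := by
  simp only [bezier, map_sum, map_smul, Finset.smul_sum]
  rw [Finset.sum_range_succ', polarDerivative_one_bernsteinPolynomial_zero]
  simp only [polarDerivative_one_bernsteinPolynomial_succ, smul_zero, add_zero, smul_comm (c _)]

/-- The new control points are one step of de Casteljau's algorithm at `a`. -/
theorem polarDerivative_bezier (q : ℕ) (a : R) (c : ℕ → R) :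
    polarDerivative (q + 1) a (bezier (q + 1) c)
      = (q + 1 : R) • bezier q (fun k => (1 - a) * c k + a * c (k + 1)) := by
  rw [polarDerivative_eq_one_sub_smul_add_smul, LinearMap.add_apply, LinearMap.smul_apply,
    LinearMap.smul_apply, polarDerivative_zero_bezier, polarDerivative_one_bezier,
    smul_comm (1 - a), smul_comm a, ← smul_add, smul_bezier, smul_bezier, bezier, bezier, bezier,
    ← Finset.sum_add_distrib]
  simp [add_smul]

section

variable [IsDomain R] [CharZero R]

/-- The `k`-th derivative at `0` sees only the control points `c 0, …, c k`, and `c k` with a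
nonzero weight. -/
theorem eq_zero_of_bezier_eq_zero {p : ℕ} {c : ℕ → R} (h : bezier p c = 0) :
    ∀ k ≤ p, c k = 0 := by
  intro k
  induction k using Nat.strong_induction_on with
  | _ k ih =>
    intro hkp
    have hk := congrArg (fun P : R[X] => (derivative^[k] P).eval 0) h
    simp only [bezier, iterate_derivative_sum, iterate_derivative_smul, eval_finsetSum, eval_smul,
      smul_eq_mul, iterate_map_zero, eval_zero] at hk
    rw [Finset.sum_eq_single_of_mem k (Finset.mem_range.2 (Nat.lt_succ_of_le hkp))] at hk
    · exact (mul_eq_zero.1 hk).resolve_right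
        (bernsteinPolynomial.iterate_derivative_at_0_ne_zero R p k hkp)
    · intro l hl hlk
      rcases hlk.lt_or_gt with hlk | hlk
      · rw [ih l hlk (by omega), zero_mul]
      · rw [bernsteinPolynomial.iterate_derivative_at_0_eq_zero_of_lt R p hlk, mul_zero]

theorem coeff_eq_of_bezier_eq {p : ℕ} {c d : ℕ → R} (h : bezier p c = bezier p d) {k : ℕ}
    (hk : k ≤ p) : c k = d k :=
  sub_eq_zero.1 (eq_zero_of_bezier_eq_zero (c := c - d) (by rw [← bezier_sub, h, sub_self]) k hk)

end

theorem polarDerivative_comp_affine {K : Type*} [Field K] (d : ℕ) (a u : K) {h : K} (hh : h ≠ 0)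
    (P : K[X]) :
    (polarDerivative d a P).comp (C h * X + C u)
      = polarDerivative d ((a - u) / h) (P.comp (C h * X + C u)) := by
  simp only [polarDerivative_apply, derivative_comp, mul_comp, add_comp, sub_comp, C_comp, X_comp,
    natCast_comp, derivative_add, derivative_mul, derivative_C, derivative_X]
  have : C ((a - u) / h) * C h = C a - C u := by rw [← C_mul, div_mul_cancel₀ _ hh, C_sub]
  linear_combination -(derivative P).comp (C h * X + C u) * this

end Polynomial

open Set

section LocalBSpline

variable (t : ℤ → ℝ) (j : ℤ)

/-- The polynomial that agrees with `bspline t n p l` on the knot span `[t j, t (j + 1))`. -/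
noncomputable def localBSpline : ℕ → ℤ → ℝ[X]
  | 0, l => if l = j then 1 else 0
  | p + 1, l => C (t (l + p + 1) - t l)⁻¹ * (X - C (t l)) * localBSpline p l
      + C (t (l + 1 + p + 1) - t (l + 1))⁻¹ * (C (t (l + 1 + p + 1)) - X) * localBSpline p (l + 1)

theorem localBSpline_succ (p : ℕ) (l : ℤ) :
    localBSpline t j (p + 1) l
      = C (t (l + p + 1) - t l)⁻¹ * (X - C (t l)) * localBSpline t j p l
        + C (t (l + 1 + p + 1) - t (l + 1))⁻¹ * (C (t (l + 1 + p + 1)) - X)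
          * localBSpline t j p (l + 1) :=
  rfl

theorem localBSpline_eq_zero {p : ℕ} {l : ℤ} (h : j < l ∨ l + p < j) :
    localBSpline t j p l = 0 := by
  induction p generalizing l with
  | zero => simp [localBSpline, show l ≠ j by omega]
  | succ p ih => rw [localBSpline_succ, ih (by omega), ih (by omega), mul_zero, mul_zero, add_zero]

theorem eval_localBSpline {n : ℕ} (hmono : MonotoneOn t (Icc 0 n)) (hj0 : 0 ≤ j) (hjn : j < n)
    {u : ℝ} (hu : u ∈ Ico (t j) (t (j + 1))) (p : ℕ) (l : ℤ) :
    (localBSpline t j p l).eval u = bspline t n p l u := by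
  induction p generalizing l with
  | zero =>
    by_cases hl : l = j
    · simp [localBSpline, bspline, hl, hj0, hjn, hu.1, hu.2]
    · have hout : ¬ (0 ≤ l ∧ l < n ∧ t l ≤ u ∧ u < t (l + 1)) := by
        rintro ⟨hl0, hln, hlu, hul⟩
        rcases Ne.lt_or_gt hl with hlj | hjl
        · linarith [hu.1, hmono ⟨by omega, by omega⟩ ⟨hj0, hjn.le⟩ (by omega : l + 1 ≤ j)]
        · linarith [hu.2, hmono ⟨by omega, by omega⟩ ⟨hl0, hln.le⟩ (by omega : j + 1 ≤ l)]
      simp [localBSpline, bspline, hl, hout]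
  | succ p ih =>
    by_cases hl : -((p : ℤ) + 1) ≤ l ∧ l < n
    · simp only [localBSpline_succ, bspline, hl, and_self, if_true, eval_add, eval_mul, eval_C,
        eval_sub, eval_X, ih, div_eq_inv_mul]
      rw [show (p : ℤ) + 1 + l = l + p + 1 by ring,
        show l + (p : ℤ) + 1 + 1 = l + 1 + p + 1 by ring]
    · simp only [bspline, hl, if_false, eval_zero,
        localBSpline_eq_zero t j (by omega : j < l ∨ l + ↑(p + 1) < j)]

theorem localBSpline_comp_eq_bezier {n : ℕ} (hmono : MonotoneOn t (Icc 0 n)) (hj0 : 0 ≤ j)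
    (hjn : j < n) (hspan : t j < t (j + 1)) {p : ℕ} {l : ℤ} {c : ℕ → ℝ}
    (hc : ∀ u ∈ Ico (t j) (t (j + 1)),
      bspline t n p l u
        = ∑ k ∈ Finset.range (p + 1), c k * bern p k ((u - t j) / (t (j + 1) - t j))) :
    (localBSpline t j p l).comp (C (t (j + 1) - t j) * X + C (t j)) = bezier p c := by
  have hh : 0 < t (j + 1) - t j := sub_pos.2 hspan
  refine eq_of_infinite_eval_eq _ _ ((Ico_infinite zero_lt_one).mono fun s hs => ?_)
  have hu : (t (j + 1) - t j) * s + t j ∈ Ico (t j) (t (j + 1)) :=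
    ⟨by nlinarith [hs.1], by nlinarith [hs.2]⟩
  simp only [mem_ofPred_eq, eval_comp, eval_add, eval_mul, eval_C, eval_X,
    eval_localBSpline t j hmono hj0 hjn hu, hc _ hu, eval_bezier, add_sub_cancel_right,
    mul_div_cancel_left₀ s hh.ne']

theorem C_mul_C_inv_mul_localBSpline {a b : ℤ} (hmono : MonotoneOn t (Icc a b))
    (hspan : t j < t (j + 1)) {p : ℕ} {l : ℤ} (ha : a ≤ l) (hb : l + p + 1 ≤ b) :
    C (t b - t a) * C (t b - t a)⁻¹ * localBSpline t j p l = localBSpline t j p l := by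
  by_cases hsupp : l ≤ j ∧ j ≤ l + p
  · have hta : t a ≤ t j := hmono ⟨le_rfl, by omega⟩ ⟨by omega, by omega⟩ (by omega)
    have htb : t (j + 1) ≤ t b := hmono ⟨by omega, by omega⟩ ⟨by omega, le_rfl⟩ (by omega)
    rw [← C_mul, mul_inv_cancel₀ (by linarith), C_1, one_mul]
  · rw [localBSpline_eq_zero t j (by omega), mul_zero]

theorem derivative_localBSpline {p : ℕ} (hmono : MonotoneOn t (Icc (j - p) (j + p + 1)))
    (hspan : t j < t (j + 1)) (l : ℤ) :
    derivative (localBSpline t j (p + 1) l)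
      = ((p : ℝ[X]) + 1) * (C (t (l + p + 1) - t l)⁻¹ * localBSpline t j p l
          - C (t (l + 1 + p + 1) - t (l + 1))⁻¹ * localBSpline t j p (l + 1)) := by
  induction p generalizing l with
  | zero =>
    simp only [localBSpline]
    split_ifs <;> simp
    ring
  | succ p ih =>
    have ih' := ih (hmono.mono (Icc_subset_Icc (by push_cast; omega) (by push_cast; omega)))
    -- the `0/0` convention is harmless: where these knot differences vanish, so does `N_{p,l+1}`
    have hcollapse : (C (t (l + 1 + p + 1) - t l) * C (t (l + 1 + p + 1) - t l)⁻¹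
        - C (t (l + 1 + 1 + p + 1) - t (l + 1)) * C (t (l + 1 + 1 + p + 1) - t (l + 1))⁻¹)
          * localBSpline t j p (l + 1) = 0 := by
      by_cases hsupp : l + 1 ≤ j ∧ j ≤ l + 1 + p
      · have hsub := fun a b (h₁ : j - (p + 1 : ℕ) ≤ a) (h₂ : b ≤ j + (p + 1 : ℕ) + 1) =>
          hmono.mono (Icc_subset_Icc h₁ h₂)
        rw [sub_mul, C_mul_C_inv_mul_localBSpline t j (hsub l _ (by omega) (by omega)) hspan
          (by omega) (by omega), C_mul_C_inv_mul_localBSpline t j (hsub (l + 1) _ (by omega)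
          (by omega)) hspan le_rfl (by omega), sub_self]
      · rw [localBSpline_eq_zero t j (by omega), mul_zero]
    rw [localBSpline_succ t j (p + 1) l]
    simp only [derivative_add, derivative_mul, derivative_C, derivative_X, derivative_sub, ih']
    rw [localBSpline_succ t j p l, localBSpline_succ t j p (l + 1)]
    simp only [Nat.cast_succ, show ∀ x : ℤ, x + (p + 1) + 1 = x + 1 + p + 1 from fun x => by ring,
      map_sub] at hcollapse ⊢
    linear_combination (-((p : ℝ[X]) + 1) * C (t (l + 1 + p + 1) - t (l + 1))⁻¹) * hcollapse

theorem polarDerivative_localBSpline {p : ℕ} (hmono : MonotoneOn t (Icc (j - p) (j + p + 1)))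
    (hspan : t j < t (j + 1)) (a : ℝ) (l : ℤ) :
    polarDerivative (p + 1) a (localBSpline t j (p + 1) l)
      = ((p : ℝ[X]) + 1) * (C ((a - t l) / (t (l + p + 1) - t l)) * localBSpline t j p l
          + C ((t (l + 1 + p + 1) - a) / (t (l + 1 + p + 1) - t (l + 1)))
            * localBSpline t j p (l + 1)) := by
  rw [polarDerivative_apply, derivative_localBSpline t j hmono hspan, localBSpline_succ]
  simp only [div_eq_mul_inv, map_mul, map_sub, Nat.cast_succ]
  ring

/-- Both sides are multiples of `localBSpline t j p (l + 1)`, the B-spline of lower degree that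
`N_{p+1,l}` and `N_{p+1,l+1}` share. -/
theorem polarDerivative_localBSpline_adjacent {p : ℕ}
    (hmono : MonotoneOn t (Icc (j - p) (j + p + 1))) (hspan : t j < t (j + 1)) (l : ℤ) :
    (t (l + 1 + 1 + p + 1) - t (l + 1))
        • polarDerivative (p + 1) (t l) (localBSpline t j (p + 1) l)
      = (t (l + 1 + p + 1) - t l)
          • polarDerivative (p + 1) (t (l + 1 + 1 + p + 1)) (localBSpline t j (p + 1) (l + 1)) := by
  rw [polarDerivative_localBSpline t j hmono hspan, polarDerivative_localBSpline t j hmono hspan,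
    smul_eq_C_mul, smul_eq_C_mul, sub_self, sub_self, zero_div, zero_div, C_0]
  simp only [div_eq_mul_inv, map_mul, map_sub]
  ring

end LocalBSpline

theorem bspline_bezier_coeff_recurrence_general
    (m n : ℕ) (t : ℤ → ℝ)
    (hmono : ∀ k l : ℤ, -(m : ℤ) ≤ k → k ≤ l → l ≤ (n : ℤ) + m → t k ≤ t l)
    (j : ℤ) (hj1 : 0 ≤ j) (hj2 : j ≤ (n : ℤ) - 1) (hspan : t j < t (j + 1))
    (b : ℤ → ℕ → ℝ)
    (hb : ∀ i : ℤ, ∀ u ∈ Set.Ico (t j) (t (j + 1)),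
      bspline t n m i u
        = ∑ k ∈ Finset.range (m + 1),
            b i k * bern m k ((u - t j) / (t (j + 1) - t j)))
    (i : ℤ) (hi1 : j - m < i) (hi2 : i < j)
    (k : ℕ) (hk : k < m) :
    b i k = (t j - t i) / (t (j + 1) - t i) * b i (k + 1)
      + ((t ((m : ℤ) + i + 1) - t i) / (t ((m : ℤ) + i + 2) - t (i + 1)))
          / (t (j + 1) - t i)
          * ((t (j + 1) - t ((m : ℤ) + i + 2)) * b (i + 1) k
              + (t ((m : ℤ) + i + 2) - t j) * b (i + 1) (k + 1)) := by
  obtain ⟨p, rfl⟩ : ∃ p, m = p + 1 := ⟨m - 1, by omega⟩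
  have hmonoOn : MonotoneOn t (Icc (-((p + 1 : ℕ) : ℤ)) (n + (p + 1 : ℕ))) :=
    fun x hx y hy hxy => hmono x y hx.1 hxy hy.2
  have hh : t (j + 1) - t j ≠ 0 := (sub_pos.2 hspan).ne'
  have hbez (l : ℤ) : (localBSpline t j (p + 1) l).comp (C (t (j + 1) - t j) * X + C (t j))
      = bezier (p + 1) (b l) :=
    localBSpline_comp_eq_bezier t j (hmonoOn.mono (Icc_subset_Icc (by omega) (by omega))) hj1
      (by omega) hspan (hb l)
  have key := congrArg (fun P => P.comp (C (t (j + 1) - t j) * X + C (t j)))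
    (polarDerivative_localBSpline_adjacent t j (p := p)
      (hmonoOn.mono (Icc_subset_Icc (by omega) (by omega))) hspan i)
  simp only [smul_comp, polarDerivative_comp_affine _ _ _ hh, hbez, polarDerivative_bezier,
    smul_smul, smul_bezier] at key
  have hcoef := coeff_eq_of_bezier_eq key (by omega : k ≤ p)
  simp only [Pi.smul_apply, smul_eq_mul] at hcoef
  rw [show ((p + 1 : ℕ) : ℤ) + i + 1 = i + 1 + p + 1 by push_cast; ring,
    show ((p + 1 : ℕ) : ℤ) + i + 2 = i + 1 + 1 + p + 1 by push_cast; ring]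
  have hti : t i ≤ t j := hmono i j (by omega) hi2.le (by omega)
  have htT : t (j + 1) ≤ t (i + 1 + 1 + p + 1) := hmono _ _ (by omega) (by omega) (by omega)
  have hti1 : t (i + 1) ≤ t j := hmono _ _ (by omega) (by omega) (by omega)
  have hji : t (j + 1) - t i ≠ 0 := by linarith
  have hT : t (i + 1 + 1 + p + 1) - t (i + 1) ≠ 0 := by linarith
  field_simp at hcoef ⊢
  linear_combination hcoef

/-- the recurrence relation for the adjusted Bernstein–Bézier
coefficients `b_{m,k}^{(i,j)}` of the B-spline functions `N_{m,i}` over a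
non-empty knot span `[t_j, t_{j+1})`, for `j − m < i < j`:
`b_{m,k}^{(i,j)} = ((t_j − t_i)/(t_{j+1} − t_i))·b_{m,k+1}^{(i,j)}
   + (v_{mi}/(t_{j+1} − t_i))·((t_{j+1} − t_{m+i+2})·b_{m,k}^{(i+1,j)}
        + (t_{m+i+2} − t_j)·b_{m,k+1}^{(i+1,j)})`,
where `v_{mi} = (t_{m+i+1} − t_i)/(t_{m+i+2} − t_{i+1})`. The coefficients are
characterized by `N_{m,i}(u) = ∑_{k=0}^{m} b_{m,k}^{(i,j)}·B^m_k((u−t_j)/(t_{j+1}−t_j))`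
on `[t_j, t_{j+1})`. -/
theorem bspline_bezier_coeff_recurrence
    (m n : ℕ) (hm : 1 ≤ m) (hn : 1 ≤ n) (t : ℤ → ℝ)
    (hmono : ∀ k l : ℤ, -(m : ℤ) ≤ k → k ≤ l → l ≤ (n : ℤ) + m → t k ≤ t l)
    (h0n : t 0 < t n)
    (hmult : ∀ r : ℤ, 1 ≤ r → r ≤ (n : ℤ) - 1 →
      ((Finset.Icc (-(m : ℤ)) ((n : ℤ) + m)).filter (fun k => t k = t r)).card ≤ m)
    (j : ℤ) (hj1 : 0 ≤ j) (hj2 : j ≤ (n : ℤ) - 1) (hspan : t j < t (j + 1))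
    (b : ℤ → ℕ → ℝ)
    (hb : ∀ i : ℤ, ∀ u ∈ Set.Ico (t j) (t (j + 1)),
      bspline t n m i u
        = ∑ k ∈ Finset.range (m + 1),
            b i k * bern m k ((u - t j) / (t (j + 1) - t j)))
    (i : ℤ) (hi1 : j - m < i) (hi2 : i < j)
    (k : ℕ) (hk : k < m) :
    b i k = (t j - t i) / (t (j + 1) - t i) * b i (k + 1)
      + ((t ((m : ℤ) + i + 1) - t i) / (t ((m : ℤ) + i + 2) - t (i + 1)))
          / (t (j + 1) - t i)
          * ((t (j + 1) - t ((m : ℤ) + i + 2)) * b (i + 1) k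
              + (t ((m : ℤ) + i + 2) - t j) * b (i + 1) (k + 1)) :=
  bspline_bezier_coeff_recurrence_general m n t hmono j hj1 hj2 hspan b hb i hi1 hi2 k hk
end

section
/- Suppose m ≥ 1, no inner knot has multiplicity greater than m, and fix j with 0 ≤ j ≤ n−1 such that t_j < t_{j+1}. Then for every i with j − m ≤ i ≤ j − 1, the leading adjusted Bernstein–Bézier coefficients of the B-spline functions over the knot span [t_j, t_{j+1}) satisfy the recurrence b_{m,m}^{(i,j)} = ((t_{j+1} − t_i)/(t_{m+i} − t_i))·b_{m−1,m−1}^{(i,j)} + ((t_{m+i+1} − t_{j+1})/(t_{m+i+1} − t_{i+1}))·b_{m−1,m−1}^{(i+1,j)}, where a fraction whose denominator vanishes is replaced by 0 and where b_{p,p}^{(i,j)} := 0 whenever i < j − p. -/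
open Filter Topology Finset

lemma bern_one (p k : ℕ) : bern p k 1 = if k = p then 1 else 0 := by
  rcases lt_trichotomy k p with hk | rfl | hk
  · simp [bern, hk.ne, zero_pow (Nat.sub_ne_zero_of_lt hk)]
  · simp [bern]
  · simp [bern, hk.ne', Nat.choose_eq_zero_of_lt hk]

@[fun_prop]
lemma continuous_bern (p k : ℕ) : Continuous (bern p k) := by
  unfold bern; fun_prop

lemma tendsto_nhdsLT_of_eqOn_bernstein_sum {f : ℝ → ℝ} {a c : ℝ} (hac : a < c)
    (p : ℕ) (coeff : ℕ → ℝ)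
    (hf : ∀ u ∈ Set.Ico a c,
      f u = ∑ k ∈ range (p + 1), coeff k * bern p k ((u - a) / (c - a))) :
    Tendsto f (𝓝[<] c) (𝓝 (coeff p)) := by
  have hcont :
      Continuous fun u => ∑ k ∈ range (p + 1), coeff k * bern p k ((u - a) / (c - a)) := by
    fun_prop
  have hval : ∑ k ∈ range (p + 1), coeff k * bern p k ((c - a) / (c - a)) = coeff p := by
    simp [div_self (sub_ne_zero.2 hac.ne'), bern_one]
  refine (hval ▸ hcont.continuousWithinAt.tendsto).congr' ?_
  filter_upwards [Ico_mem_nhdsLT hac] with u hu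
  exact (hf u hu).symm

lemma bspline_eq_zero_of_le (t : ℤ → ℝ) (n p : ℕ) (i : ℤ)
    (ht : MonotoneOn t (Set.Icc (i + 1) (i + p + 1))) {u : ℝ} (hu : t (i + p + 1) ≤ u) :
    bspline t n p i u = 0 := by
  induction p generalizing i with
  | zero => simp [bspline] at hu ⊢; intros; linarith
  | succ p ih =>
    have hle : t (i + p + 1) ≤ t (i + (p + 1 : ℕ) + 1) :=
      ht ⟨by omega, by omega⟩ ⟨by omega, by omega⟩ (by omega)
    have hleft : bspline t n p i u = 0 :=
      ih i (ht.mono (Set.Icc_subset_Icc le_rfl (by omega))) (hle.trans hu)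
    have hright : bspline t n p (i + 1) u = 0 :=
      ih (i + 1) (ht.mono (Set.Icc_subset_Icc (by omega) (by omega)))
        (by convert hu using 2; push_cast; ring)
    simp only [bspline, hleft, hright]
    simp

lemma bspline_eq_of_one_le (t : ℤ → ℝ) (n m : ℕ) (hm : 1 ≤ m) (i : ℤ)
    (hi1 : -(m : ℤ) ≤ i) (hi2 : i < n) (u : ℝ) :
    bspline t n m i u
      = (u - t i) / (t ((m : ℤ) + i) - t i) * bspline t n (m - 1) i u
        + (t ((m : ℤ) + i + 1) - u) / (t ((m : ℤ) + i + 1) - t (i + 1))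
            * bspline t n (m - 1) (i + 1) u := by
  obtain ⟨p, rfl⟩ := Nat.exists_eq_add_of_le' hm
  simp only [bspline, Nat.add_sub_cancel]
  push_cast at hi1 ⊢
  rw [if_pos ⟨hi1, hi2⟩]

theorem bspline_bezier_leading_coeff_recurrence_general
    (m n : ℕ) (hm : 1 ≤ m) (t : ℤ → ℝ)
    (hmono : ∀ k l : ℤ, -(m : ℤ) ≤ k → k ≤ l → l ≤ (n : ℤ) + m → t k ≤ t l)
    (j : ℤ) (hj1 : 0 ≤ j) (hj2 : j ≤ (n : ℤ) - 1) (hspan : t j < t (j + 1))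
    (b : ℕ → ℤ → ℕ → ℝ)
    (hb : ∀ p : ℕ, ∀ i : ℤ, ∀ u ∈ Set.Ico (t j) (t (j + 1)),
      bspline t n p i u
        = ∑ k ∈ Finset.range (p + 1),
            b p i k * bern p k ((u - t j) / (t (j + 1) - t j)))
    (i : ℤ) (hi1 : j - m ≤ i) (hi2 : i ≤ j - 1) :
    b m i m
      = (t (j + 1) - t i) / (t ((m : ℤ) + i) - t i)
          * (if i < j - ((m : ℤ) - 1) then 0 else b (m - 1) i (m - 1))
        + (t ((m : ℤ) + i + 1) - t (j + 1)) / (t ((m : ℤ) + i + 1) - t (i + 1))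
            * (if i + 1 < j - ((m : ℤ) - 1) then 0 else b (m - 1) (i + 1) (m - 1)) := by
  have hlim (p : ℕ) (i : ℤ) : Tendsto (bspline t n p i) (𝓝[<] t (j + 1)) (𝓝 (b p i p)) :=
    tendsto_nhdsLT_of_eqOn_bernstein_sum hspan p (b p i) (hb p i)
  have hrec : Tendsto (bspline t n m i) (𝓝[<] t (j + 1))
      (𝓝 ((t (j + 1) - t i) / (t ((m : ℤ) + i) - t i) * b (m - 1) i (m - 1)
        + (t ((m : ℤ) + i + 1) - t (j + 1)) / (t ((m : ℤ) + i + 1) - t (i + 1))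
            * b (m - 1) (i + 1) (m - 1))) := by
    refine Tendsto.congr
      (fun u => (bspline_eq_of_one_le t n m hm i (by omega) (by omega) u).symm) ?_
    refine ((Tendsto.mul ?_ (hlim _ _)).add (Tendsto.mul ?_ (hlim _ _)))
      <;> exact (Continuous.tendsto (by fun_prop) _).mono_left nhdsWithin_le_nhds
  rw [tendsto_nhds_unique (hlim m i) hrec,
    if_neg (show ¬(i + 1 < j - ((m : ℤ) - 1)) by omega)]
  split_ifs with hi
  · suffices b (m - 1) i (m - 1) = 0 by rw [this]
    have hsupp : i + ((m - 1 : ℕ) : ℤ) + 1 = j := by push_cast [hm]; omega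
    have hmonoOn : MonotoneOn t (Set.Icc (i + 1) (i + (m - 1 : ℕ) + 1)) :=
      fun k ⟨hk, _⟩ l ⟨_, hl⟩ hkl => hmono k l (by omega) hkl (by omega)
    have hvanish : ∀ᶠ u in 𝓝[<] t (j + 1), bspline t n (m - 1) i u = 0 := by
      filter_upwards [Ico_mem_nhdsLT hspan] with u hu
      exact bspline_eq_zero_of_le t n (m - 1) i hmonoOn (hsupp ▸ hu.1)
    exact tendsto_nhds_unique (hlim (m - 1) i)
      (tendsto_const_nhds.congr' (hvanish.mono fun _ h => h.symm))
  · rfl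

/-- the recurrence for the leading adjusted Bernstein–Bézier
coefficients over a non-empty knot span `[t_j, t_{j+1})`:
`b_{m,m}^{(i,j)} = ((t_{j+1} − t_i)/(t_{m+i} − t_i))·b_{m−1,m−1}^{(i,j)}
    + ((t_{m+i+1} − t_{j+1})/(t_{m+i+1} − t_{i+1}))·b_{m−1,m−1}^{(i+1,j)}`
for `j − m ≤ i ≤ j − 1`, where a fraction whose denominator vanishes is `0`
(automatic for real division) and `b_{p,p}^{(i,j)} := 0` whenever `i < j − p`.
Here `b p i k` denotes `b_{p,k}^{(i,j)}`, characterized by the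
Bernstein–Bézier representation of `N_{p,i}` on `[t_j, t_{j+1})`. -/
theorem bspline_bezier_leading_coeff_recurrence
    (m n : ℕ) (hm : 1 ≤ m) (hn : 1 ≤ n) (t : ℤ → ℝ)
    (hmono : ∀ k l : ℤ, -(m : ℤ) ≤ k → k ≤ l → l ≤ (n : ℤ) + m → t k ≤ t l)
    (h0n : t 0 < t n)
    (hmult : ∀ r : ℤ, 1 ≤ r → r ≤ (n : ℤ) - 1 →
      ((Finset.Icc (-(m : ℤ)) ((n : ℤ) + m)).filter (fun k => t k = t r)).card ≤ m)
    (j : ℤ) (hj1 : 0 ≤ j) (hj2 : j ≤ (n : ℤ) - 1) (hspan : t j < t (j + 1))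
    (b : ℕ → ℤ → ℕ → ℝ)
    (hb : ∀ p : ℕ, ∀ i : ℤ, ∀ u ∈ Set.Ico (t j) (t (j + 1)),
      bspline t n p i u
        = ∑ k ∈ Finset.range (p + 1),
            b p i k * bern p k ((u - t j) / (t (j + 1) - t j)))
    (i : ℤ) (hi1 : j - m ≤ i) (hi2 : i ≤ j - 1) :
    b m i m
      = (t (j + 1) - t i) / (t ((m : ℤ) + i) - t i)
          * (if i < j - ((m : ℤ) - 1) then 0 else b (m - 1) i (m - 1))
        + (t ((m : ℤ) + i + 1) - t (j + 1)) / (t ((m : ℤ) + i + 1) - t (i + 1))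
            * (if i + 1 < j - ((m : ℤ) - 1) then 0 else b (m - 1) (i + 1) (m - 1)) :=
  bspline_bezier_leading_coeff_recurrence_general m n hm t hmono j hj1 hj2 hspan b hb i hi1 hi2
end

section
/- For m ≥ 1, any knot sequence, and any j with 0 ≤ j ≤ n−1 such that t_j < t_{j+1}, the B-spline function N_{m,j−m} satisfies, for all u ∈ [t_j, t_{j+1}): N_{m,j−m}(u) = ( (t_{j+1} − t_j)^{m−1} / ∏_{k=2}^{m} (t_{j+1} − t_{j+1−k}) ) · B^m_0((u − t_j)/(t_{j+1} − t_j)). Equivalently, its adjusted Bernstein–Bézier coefficients over [t_j, t_{j+1}) are b_{m,0}^{(j−m,j)} = (t_{j+1} − t_j)^{m−1} / ∏_{k=2}^{m} (t_{j+1} − t_{j+1−k}) and b_{m,k}^{(j−m,j)} = 0 for k = 1, 2, …, m. -/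
/-!
On `[t_j, t_{j+1})` the only degree-`0` B-spline that does not vanish is `N_{0,j}`, and
`N_{p,i}` vanishes there as soon as all its knots `t_{i+1}, …, t_{i+p+1}` lie left of `t_j`.
Hence in the de Boor–Cox recursion for `N_{p,j-p}` only the second term survives, and induction
gives `N_{p,j-p}(u) = (t_{j+1} - u)^p / ∏_{k=1}^{p} (t_{j+1} - t_{j+1-k})`, a multiple of
`B^p_0`. The coefficient claims then follow from the linear independence of the Bernstein
polynomials, read off triangularly from their lowest-order coefficients.
-/

open Finset Polynomial

lemma bspline_eq_zero_of_knots_le (t : ℤ → ℝ) (n p : ℕ) {i : ℤ} {u : ℝ}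
    (h : ∀ l : ℤ, i + 1 ≤ l → l ≤ i + p + 1 → t l ≤ u) : bspline t n p i u = 0 := by
  induction p generalizing i with
  | zero =>
    simp only [bspline]
    rw [if_neg]
    rintro ⟨-, -, -, hu⟩
    exact (h (i + 1) le_rfl (by omega)).not_gt hu
  | succ p ih =>
    simp only [bspline]
    rw [ih fun l h₁ h₂ ↦ h l h₁ (by omega), ih fun l h₁ h₂ ↦ h l (by omega) (by omega)]
    simp

lemma bspline_sub_eq_pow_div_prod (t : ℤ → ℝ) (n p : ℕ) {j : ℤ} (hj₀ : 0 ≤ j)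
    (hjn : j < n) (ht : ∀ l : ℤ, j - p < l → l ≤ j → t l ≤ t j)
    {u : ℝ} (hu : u ∈ Set.Ico (t j) (t (j + 1))) :
    bspline t n p (j - p) u
      = (t (j + 1) - u) ^ p / ∏ k ∈ Icc 1 p, (t (j + 1) - t (j + 1 - (k : ℤ))) := by
  induction p with
  | zero => simp [bspline, hj₀, hjn, hu.1, hu.2]
  | succ p ih =>
    have hleft : bspline t n p (j - (p + 1 : ℕ)) u = 0 :=
      bspline_eq_zero_of_knots_le t n p fun l h₁ h₂ ↦
        (ht l (by omega) (by omega)).trans hu.1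
    have hright : (p : ℤ) + 1 + (j - (p + 1 : ℕ)) + 1 = j + 1 := by omega
    have hnext : j - ((p + 1 : ℕ) : ℤ) + 1 = j - p := by omega
    have hlast : j + 1 - ((p + 1 : ℕ) : ℤ) = j - p := by omega
    simp only [bspline]
    rw [if_pos (by omega), hleft, hright, hnext, ih fun l h₁ h₂ ↦ ht l (by omega) h₂,
      prod_Icc_succ_top (by omega), hlast]
    field_simp
    ring

lemma pow_div_prod_Icc_one {K : Type*} [Field K] (f : ℕ → K) (hf : f 1 ≠ 0) (a : K) (m : ℕ) :
    a ^ m / ∏ k ∈ Icc 1 m, f k = (f 1 ^ (m - 1) / ∏ k ∈ Icc 2 m, f k) * (a / f 1) ^ m := by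
  cases m with
  | zero => simp
  | succ m =>
    rw [← insert_Icc_add_one_left_eq_Icc (by omega : 1 ≤ m + 1), prod_insert (by simp),
      Nat.add_sub_cancel, div_pow, pow_succ (f 1)]
    change _ / (_ * ∏ k ∈ Icc 2 (m + 1), f k) = _
    field_simp

lemma bspline_sub_eq_mul_bern (t : ℤ → ℝ) (n m : ℕ) {j : ℤ} (hj₀ : 0 ≤ j)
    (hjn : j < n) (ht : ∀ l : ℤ, j - m < l → l ≤ j → t l ≤ t j) (hspan : t j < t (j + 1))
    {u : ℝ} (hu : u ∈ Set.Ico (t j) (t (j + 1))) :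
    bspline t n m (j - m) u
      = ((t (j + 1) - t j) ^ (m - 1) / ∏ k ∈ Icc 2 m, (t (j + 1) - t (j + 1 - (k : ℤ))))
          * bern m 0 ((u - t j) / (t (j + 1) - t j)) := by
  have hd : t (j + 1) - t j ≠ 0 := (sub_pos.2 hspan).ne'
  have hx : 1 - (u - t j) / (t (j + 1) - t j) = (t (j + 1) - u) / (t (j + 1) - t j) := by
    field_simp
    ring
  rw [bspline_sub_eq_pow_div_prod t n m hj₀ hjn ht hu,
    pow_div_prod_Icc_one (fun k ↦ t (j + 1) - t (j + 1 - (k : ℤ))) (by simpa using hd)]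
  simp [bern, hx]

lemma bern_eq_eval (p k : ℕ) (x : ℝ) : bern p k x = (bernsteinPolynomial ℝ p k).eval x := by
  simp [bern, bernsteinPolynomial]

section BernsteinCoeff

variable {R : Type*} [CommRing R]

lemma bernsteinPolynomial_eq_C_mul_X_pow (n ν : ℕ) :
    bernsteinPolynomial R n ν = C (n.choose ν : R) * ((1 - X) ^ (n - ν) * X ^ ν) := by
  simp only [bernsteinPolynomial, map_natCast]
  ring

lemma bernsteinPolynomial_coeff_of_lt {n ν k : ℕ} (h : k < ν) :
    (bernsteinPolynomial R n ν).coeff k = 0 := by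
  simp [bernsteinPolynomial_eq_C_mul_X_pow, coeff_mul_X_pow', h.not_ge]

lemma bernsteinPolynomial_coeff_self (n ν : ℕ) :
    (bernsteinPolynomial R n ν).coeff ν = n.choose ν := by
  simp [bernsteinPolynomial_eq_C_mul_X_pow, coeff_mul_X_pow', coeff_zero_eq_eval_zero]

lemma eq_zero_of_sum_C_mul_bernsteinPolynomial_eq_zero [IsDomain R] [CharZero R] {n : ℕ}
    {a : ℕ → R} (h : ∑ ν ∈ range (n + 1), C (a ν) * bernsteinPolynomial R n ν = 0) :
    ∀ k ≤ n, a k = 0 := by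
  intro k
  induction k using Nat.strong_induction_on with
  | _ k ih =>
    intro hkn
    have hcoeff := congrArg (coeff · k) h
    simp only [finsetSum_coeff, coeff_C_mul, coeff_zero] at hcoeff
    rw [sum_eq_single_of_mem k (mem_range.2 (by omega)) fun ν _ hνk ↦ ?_,
      bernsteinPolynomial_coeff_self] at hcoeff
    · exact (mul_eq_zero.1 hcoeff).resolve_right (by exact_mod_cast (Nat.choose_pos hkn).ne')
    · rcases hνk.lt_or_gt with hlt | hgt
      · rw [ih ν hlt (by omega), zero_mul]
      · rw [bernsteinPolynomial_coeff_of_lt hgt, mul_zero]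

end BernsteinCoeff

lemma bern_coeff_eq_of_eqOn {p : ℕ} {a a' : ℕ → ℝ} {S : Set ℝ} (hS : S.Infinite)
    (h : ∀ x ∈ S, ∑ k ∈ range (p + 1), a k * bern p k x
      = ∑ k ∈ range (p + 1), a' k * bern p k x) :
    ∀ k ≤ p, a k = a' k := by
  have hpoly : ∑ k ∈ range (p + 1), C (a k - a' k) * bernsteinPolynomial ℝ p k = 0 := by
    refine eq_zero_of_infinite_isRoot _ (hS.mono fun x hx ↦ ?_)
    simp [eval_finsetSum, sub_mul, ← bern_eq_eval, h x hx]
  intro k hk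
  exact sub_eq_zero.1 (eq_zero_of_sum_C_mul_bernsteinPolynomial_eq_zero hpoly k hk)

theorem bspline_first_over_span_general
    (m n : ℕ) (t : ℤ → ℝ)
    (hmono : ∀ k l : ℤ, -(m : ℤ) ≤ k → k ≤ l → l ≤ (n : ℤ) + m → t k ≤ t l)
    (j : ℤ) (hj1 : 0 ≤ j) (hj2 : j ≤ (n : ℤ) - 1) (hspan : t j < t (j + 1))
    (b : ℕ → ℝ)
    (hb : ∀ u ∈ Set.Ico (t j) (t (j + 1)),
      bspline t n m (j - m) u
        = ∑ k ∈ Finset.range (m + 1),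
            b k * bern m k ((u - t j) / (t (j + 1) - t j))) :
    (∀ u ∈ Set.Ico (t j) (t (j + 1)),
        bspline t n m (j - m) u
          = ((t (j + 1) - t j) ^ (m - 1)
                / ∏ k ∈ Finset.Icc 2 m, (t (j + 1) - t (j + 1 - (k : ℤ))))
              * bern m 0 ((u - t j) / (t (j + 1) - t j)))
      ∧ b 0 = (t (j + 1) - t j) ^ (m - 1)
                / ∏ k ∈ Finset.Icc 2 m, (t (j + 1) - t (j + 1 - (k : ℤ)))
      ∧ ∀ k : ℕ, 1 ≤ k → k ≤ m → b k = 0 := by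
  set c := (t (j + 1) - t j) ^ (m - 1) / ∏ k ∈ Icc 2 m, (t (j + 1) - t (j + 1 - (k : ℤ)))
  have hN : ∀ u ∈ Set.Ico (t j) (t (j + 1)),
      bspline t n m (j - m) u = c * bern m 0 ((u - t j) / (t (j + 1) - t j)) :=
    fun u hu ↦ bspline_sub_eq_mul_bern t n m hj1 (by omega)
      (fun l h₁ h₂ ↦ hmono l j (by omega) h₂ (by omega)) hspan hu
  have hS : ((fun u ↦ (u - t j) / (t (j + 1) - t j)) '' Set.Ico (t j) (t (j + 1))).Infinite :=
    (Set.Ico_infinite hspan).image fun u _ v _ huv ↦ by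
      simpa [div_left_inj' (sub_pos.2 hspan).ne'] using huv
  have hcoeff := bern_coeff_eq_of_eqOn (a := b) (a' := fun k ↦ if k = 0 then c else 0) hS <| by
    rintro _ ⟨u, hu, rfl⟩
    rw [← hb u hu, hN u hu]
    simp
  refine ⟨hN, by simpa using hcoeff 0 (by omega), fun k hk₁ hk₂ ↦ ?_⟩
  simpa [show k ≠ 0 by omega] using hcoeff k hk₂

/-- over a non-empty knot span `[t_j, t_{j+1})` one has
`N_{m,j−m}(u) = ((t_{j+1} − t_j)^{m−1} / ∏_{k=2}^{m} (t_{j+1} − t_{j+1−k}))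
      · B^m_0((u − t_j)/(t_{j+1} − t_j))`;
equivalently, the adjusted Bernstein–Bézier coefficients of `N_{m,j−m}` are
`b_{m,0}^{(j−m,j)} = (t_{j+1} − t_j)^{m−1} / ∏_{k=2}^{m} (t_{j+1} − t_{j+1−k})`
and `b_{m,k}^{(j−m,j)} = 0` for `k = 1, …, m`. -/
theorem bspline_first_over_span
    (m n : ℕ) (hm : 1 ≤ m) (hn : 1 ≤ n) (t : ℤ → ℝ)
    (hmono : ∀ k l : ℤ, -(m : ℤ) ≤ k → k ≤ l → l ≤ (n : ℤ) + m → t k ≤ t l)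
    (h0n : t 0 < t n)
    (j : ℤ) (hj1 : 0 ≤ j) (hj2 : j ≤ (n : ℤ) - 1) (hspan : t j < t (j + 1))
    (b : ℕ → ℝ)
    (hb : ∀ u ∈ Set.Ico (t j) (t (j + 1)),
      bspline t n m (j - m) u
        = ∑ k ∈ Finset.range (m + 1),
            b k * bern m k ((u - t j) / (t (j + 1) - t j))) :
    (∀ u ∈ Set.Ico (t j) (t (j + 1)),
        bspline t n m (j - m) u
          = ((t (j + 1) - t j) ^ (m - 1)
                / ∏ k ∈ Finset.Icc 2 m, (t (j + 1) - t (j + 1 - (k : ℤ))))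
              * bern m 0 ((u - t j) / (t (j + 1) - t j)))
      ∧ b 0 = (t (j + 1) - t j) ^ (m - 1)
                / ∏ k ∈ Finset.Icc 2 m, (t (j + 1) - t (j + 1 - (k : ℤ)))
      ∧ ∀ k : ℕ, 1 ≤ k → k ≤ m → b k = 0 :=
  bspline_first_over_span_general m n t hmono j hj1 hj2 hspan b hb
end

section
/- For m ≥ 1, any knot sequence, and any j with 0 ≤ j ≤ n−1 such that t_j < t_{j+1}, the B-spline function N_{m,j} satisfies, for all u ∈ [t_j, t_{j+1}): N_{m,j}(u) = ( (t_{j+1} − t_j)^{m−1} / ∏_{k=2}^{m} (t_{j+k} − t_j) ) · B^m_m((u − t_j)/(t_{j+1} − t_j)). Equivalently, its adjusted Bernstein–Bézier coefficients over [t_j, t_{j+1}) are b_{m,m}^{(j,j)} = (t_{j+1} − t_j)^{m−1} / ∏_{k=2}^{m} (t_{j+k} − t_j) and b_{m,k}^{(j,j)} = 0 for k = 0, 1, …, m−1. -/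
open Finset Polynomial

lemma bern_self (p : ℕ) (x : ℝ) : bern p p x = x ^ p := by
  simp [bern]

lemma bern_div_one_add_mul_pow {p k : ℕ} (hk : k ≤ p) {y : ℝ} (hy : 1 + y ≠ 0) :
    bern p k (y / (1 + y)) * (1 + y) ^ p = p.choose k * y ^ k := by
  have hsplit : (1 + y) ^ p = (1 + y) ^ k * (1 + y) ^ (p - k) := by
    rw [← pow_add, Nat.add_sub_cancel' hk]
  have hcompl : 1 - y / (1 + y) = 1 / (1 + y) := by field_simp; ring
  rw [bern, hcompl, div_pow, div_pow, one_pow, hsplit]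
  field_simp

lemma bern_coeff_eq_zero_of_sum_eq_zero {p : ℕ} {b : ℕ → ℝ}
    (h : ∀ x ∈ Set.Ico (0 : ℝ) 1, ∑ k ∈ range (p + 1), b k * bern p k x = 0) :
    ∀ k ≤ p, b k = 0 := by
  set Q : ℝ[X] := ∑ k ∈ range (p + 1), C (b k * p.choose k) * X ^ k
  have hroot : ∀ y : ℝ, 0 ≤ y → Q.IsRoot y := by
    intro y hy
    have hy' : 1 + y ≠ 0 := by positivity
    have hx : y / (1 + y) ∈ Set.Ico (0 : ℝ) 1 :=
      ⟨by positivity, (div_lt_one (by positivity)).2 (by linarith)⟩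
    calc Q.eval y = (∑ k ∈ range (p + 1), b k * bern p k (y / (1 + y))) * (1 + y) ^ p := by
          simp only [Q, eval_finsetSum, eval_mul, eval_C, eval_pow, eval_X, sum_mul]
          refine sum_congr rfl fun k hk => ?_
          rw [mul_assoc (b k) (bern p k _),
            bern_div_one_add_mul_pow (Nat.lt_succ_iff.1 (mem_range.1 hk)) hy', mul_assoc]
      _ = 0 := by rw [h _ hx, zero_mul]
  have hQ : Q = 0 := eq_zero_of_infinite_isRoot Q
    ((Set.Ici_infinite 0).mono fun y hy => hroot y hy)
  intro k hk
  have hcoeff : Q.coeff k = b k * p.choose k := by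
    simp only [Q, finsetSum_coeff, coeff_C_mul_X_pow, sum_ite_eq, mem_range,
      if_pos (Nat.lt_succ_iff.2 hk)]
  rw [hQ, coeff_zero, eq_comm, mul_eq_zero] at hcoeff
  exact hcoeff.resolve_right (Nat.cast_ne_zero.2 (Nat.choose_pos hk).ne')

lemma bern_coeff_eq_of_sum_eq_on_Ico {p : ℕ} {a c : ℝ} (hac : a < c) {b b' : ℕ → ℝ}
    (h : ∀ u ∈ Set.Ico a c, ∑ k ∈ range (p + 1), b k * bern p k ((u - a) / (c - a))
      = ∑ k ∈ range (p + 1), b' k * bern p k ((u - a) / (c - a))) :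
    ∀ k ≤ p, b k = b' k := by
  have hdiff := bern_coeff_eq_zero_of_sum_eq_zero (p := p) (b := b - b') fun x hx => by
    have hu : a + x * (c - a) ∈ Set.Ico a c :=
      ⟨by nlinarith [hx.1], by nlinarith [hx.2]⟩
    have hx' : (a + x * (c - a) - a) / (c - a) = x := by
      field_simp [(sub_pos.2 hac).ne']; ring
    simp only [Pi.sub_apply, sub_mul, sum_sub_distrib]
    rw [← hx', h _ hu, sub_self]
  exact fun k hk => sub_eq_zero.1 (hdiff k hk)

section BSpline

variable {t : ℤ → ℝ} {n : ℕ}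

lemma bspline_eq_zero_of_lt_knot (ht : MonotoneOn t (Set.Icc 0 n)) (p : ℕ) {i : ℤ}
    (hi : 0 ≤ i) {u : ℝ} (hu : u < t i) : bspline t n p i u = 0 := by
  induction p generalizing i with
  | zero =>
    simp only [bspline]
    rw [if_neg]
    exact fun h => hu.not_ge h.2.2.1
  | succ p ih =>
    simp only [bspline]
    split_ifs with h
    · have hstep : t i ≤ t (i + 1) :=
        ht ⟨hi, by omega⟩ ⟨by omega, by omega⟩ (by omega)
      rw [ih hi hu, ih (by omega) (hu.trans_le hstep), mul_zero, mul_zero, add_zero]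
    · rfl

lemma bspline_eq_prod_on_span (ht : MonotoneOn t (Set.Icc 0 n)) (p : ℕ) {j : ℤ}
    (hj : 0 ≤ j) (hjn : j < n) {u : ℝ} (hu : u ∈ Set.Ico (t j) (t (j + 1))) :
    bspline t n p j u = ∏ k ∈ Icc 1 p, (u - t j) / (t (j + k) - t j) := by
  induction p with
  | zero => simp [bspline, hj, hjn, hu.1, hu.2]
  | succ p ih =>
    simp only [bspline]
    rw [if_pos ⟨by omega, hjn⟩, ih, bspline_eq_zero_of_lt_knot ht p (by omega) hu.2,
      mul_zero, add_zero, prod_Icc_succ_top (by omega)]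
    push_cast
    ring_nf

lemma bspline_eq_on_span (ht : MonotoneOn t (Set.Icc 0 n)) (p : ℕ) {j : ℤ}
    (hj : 0 ≤ j) (hjn : j < n) (hspan : t j < t (j + 1)) {u : ℝ}
    (hu : u ∈ Set.Ico (t j) (t (j + 1))) :
    bspline t n p j u = ((t (j + 1) - t j) ^ (p - 1) / ∏ k ∈ Icc 2 p, (t (j + k) - t j))
      * ((u - t j) / (t (j + 1) - t j)) ^ p := by
  rw [bspline_eq_prod_on_span ht p hj hjn hu]
  rcases p with _ | q
  · simp
  · have hT : t (j + 1) - t j ≠ 0 := (sub_pos.2 hspan).ne'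
    rw [prod_div_distrib, prod_const, Nat.card_Icc, Nat.add_sub_cancel,
      ← insert_Icc_add_one_left_eq_Icc (by omega : 1 ≤ q + 1), prod_insert (by simp),
      Nat.cast_one, div_pow, pow_succ (t (j + 1) - t j)]
    simp only [Nat.reduceAdd, Nat.add_sub_cancel]
    generalize ∏ k ∈ Icc 2 (q + 1), (t (j + k) - t j) = P
    field_simp

end BSpline

theorem bspline_last_over_span_general
    (m n : ℕ) (t : ℤ → ℝ)
    (hmono : ∀ k l : ℤ, -(m : ℤ) ≤ k → k ≤ l → l ≤ (n : ℤ) + m → t k ≤ t l)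
    (j : ℤ) (hj1 : 0 ≤ j) (hj2 : j ≤ (n : ℤ) - 1) (hspan : t j < t (j + 1))
    (b : ℕ → ℝ)
    (hb : ∀ u ∈ Set.Ico (t j) (t (j + 1)),
      bspline t n m j u
        = ∑ k ∈ Finset.range (m + 1),
            b k * bern m k ((u - t j) / (t (j + 1) - t j))) :
    (∀ u ∈ Set.Ico (t j) (t (j + 1)),
        bspline t n m j u
          = ((t (j + 1) - t j) ^ (m - 1)
                / ∏ k ∈ Finset.Icc 2 m, (t (j + (k : ℤ)) - t j))
              * bern m m ((u - t j) / (t (j + 1) - t j)))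
      ∧ b m = (t (j + 1) - t j) ^ (m - 1)
                / ∏ k ∈ Finset.Icc 2 m, (t (j + (k : ℤ)) - t j)
      ∧ ∀ k : ℕ, k < m → b k = 0 := by
  set c := (t (j + 1) - t j) ^ (m - 1) / ∏ k ∈ Finset.Icc 2 m, (t (j + (k : ℤ)) - t j)
  have ht : MonotoneOn t (Set.Icc 0 n) := fun k hk l hl hkl =>
    hmono k l (by linarith [hk.1]) hkl (by linarith [hl.2])
  have hN : ∀ u ∈ Set.Ico (t j) (t (j + 1)),
      bspline t n m j u = c * bern m m ((u - t j) / (t (j + 1) - t j)) := fun u hu => by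
    rw [bern_self, bspline_eq_on_span ht m hj1 (by omega) hspan hu]
  have hcoeff := bern_coeff_eq_of_sum_eq_on_Ico hspan (b' := fun k => if k = m then c else 0)
    fun u hu => by
      rw [← hb u hu, hN u hu]
      simp only [ite_mul, zero_mul, sum_ite_eq', mem_range, Nat.lt_succ_self, if_true]
  refine ⟨hN, by simpa using hcoeff m le_rfl, fun k hk => ?_⟩
  simpa [hk.ne] using hcoeff k hk.le

/-- over a non-empty knot span `[t_j, t_{j+1})` one has
`N_{m,j}(u) = ((t_{j+1} − t_j)^{m−1} / ∏_{k=2}^{m} (t_{j+k} − t_j))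
      · B^m_m((u − t_j)/(t_{j+1} − t_j))`;
equivalently, the adjusted Bernstein–Bézier coefficients of `N_{m,j}` are
`b_{m,m}^{(j,j)} = (t_{j+1} − t_j)^{m−1} / ∏_{k=2}^{m} (t_{j+k} − t_j)`
and `b_{m,k}^{(j,j)} = 0` for `k = 0, …, m−1`. -/
theorem bspline_last_over_span
    (m n : ℕ) (hm : 1 ≤ m) (hn : 1 ≤ n) (t : ℤ → ℝ)
    (hmono : ∀ k l : ℤ, -(m : ℤ) ≤ k → k ≤ l → l ≤ (n : ℤ) + m → t k ≤ t l)
    (h0n : t 0 < t n)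
    (j : ℤ) (hj1 : 0 ≤ j) (hj2 : j ≤ (n : ℤ) - 1) (hspan : t j < t (j + 1))
    (b : ℕ → ℝ)
    (hb : ∀ u ∈ Set.Ico (t j) (t (j + 1)),
      bspline t n m j u
        = ∑ k ∈ Finset.range (m + 1),
            b k * bern m k ((u - t j) / (t (j + 1) - t j))) :
    (∀ u ∈ Set.Ico (t j) (t (j + 1)),
        bspline t n m j u
          = ((t (j + 1) - t j) ^ (m - 1)
                / ∏ k ∈ Finset.Icc 2 m, (t (j + (k : ℤ)) - t j))
              * bern m m ((u - t j) / (t (j + 1) - t j)))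
      ∧ b m = (t (j + 1) - t j) ^ (m - 1)
                / ∏ k ∈ Finset.Icc 2 m, (t (j + (k : ℤ)) - t j)
      ∧ ∀ k : ℕ, k < m → b k = 0 :=
  bspline_last_over_span_general m n t hmono j hj1 hj2 hspan b hb
end

section
/- Suppose some inner knot has multiplicity at least m + 1, i.e., there exists an index r with 1 ≤ r, r + m ≤ n − 1 and t_r = t_{r+m}. Then every B-spline basis function of degree m based on these knots vanishes identically on one side of t_r: for every i with −m ≤ i ≤ n−1, either N_{m,i}(u) = 0 for all u < t_r, or N_{m,i}(u) = 0 for all u ≥ t_r. -/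
lemma bspline_support_left (m n : ℕ) (hn : 1 ≤ n) (t : ℤ → ℝ)
    (hmono : ∀ k l : ℤ, -(m : ℤ) ≤ k → k ≤ l → l ≤ (n : ℤ) + m → t k ≤ t l) :
    ∀ p : ℕ, p ≤ m → ∀ i : ℤ, ∀ u : ℝ, u < t i → bspline t n p i u = 0 := by
  intro p
  induction p with
  | zero =>
    intro _ i u hu
    simp only [bspline]
    rw [if_neg]
    rintro ⟨_, _, h, _⟩
    exact absurd h (not_le.2 hu)
  | succ p ih =>
    intro hp i u hu
    simp only [bspline]
    split
    · rename_i h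
      have h1 : t i ≤ t (i + 1) := hmono i (i + 1) (by omega) (by omega) (by omega)
      rw [ih (by omega) i u hu, ih (by omega) (i + 1) u (lt_of_lt_of_le hu h1)]
      ring
    · rfl

lemma bspline_support_right (m n : ℕ) (hn : 1 ≤ n) (t : ℤ → ℝ)
    (hmono : ∀ k l : ℤ, -(m : ℤ) ≤ k → k ≤ l → l ≤ (n : ℤ) + m → t k ≤ t l) :
    ∀ p : ℕ, p ≤ m → ∀ i : ℤ, ∀ u : ℝ, t (i + p + 1) ≤ u → bspline t n p i u = 0 := by
  intro p
  induction p with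
  | zero =>
    intro _ i u hu
    simp only [bspline]
    rw [if_neg]
    rintro ⟨_, _, _, h⟩
    have : i + (0:ℕ) + 1 = i + 1 := by omega
    rw [this] at hu
    exact absurd hu (not_le.2 h)
  | succ p ih =>
    intro hp i u hu
    simp only [bspline]
    split
    · rename_i h
      have e2 : i + ((p : ℤ) + 1) + 1 = (i + 1) + p + 1 := by ring
      have hu' : t ((i + 1) + p + 1) ≤ u := by
        have : (i + ((p:ℕ)+1 : ℕ) : ℤ) + 1 = (i + 1) + p + 1 := by push_cast; ring
        rwa [this] at hu
      have h1 : t (i + p + 1) ≤ t ((i + 1) + p + 1) :=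
        hmono _ _ (by omega) (by omega) (by omega)
      rw [ih (by omega) i u (le_trans h1 hu'), ih (by omega) (i + 1) u hu']
      ring
    · rfl

/-- if some inner knot has multiplicity at least `m + 1`, i.e.
there is `r` with `1 ≤ r`, `r + m ≤ n − 1` and `t_r = t_{r+m}`, then every
B-spline basis function of degree `m` vanishes identically on one side of
`t_r`: for each `−m ≤ i ≤ n − 1`, either `N_{m,i}(u) = 0` for all `u < t_r`,
or `N_{m,i}(u) = 0` for all `u ≥ t_r`. -/
theorem bspline_vanishes_on_one_side
    (m n : ℕ) (hn : 1 ≤ n) (t : ℤ → ℝ)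
    (hmono : ∀ k l : ℤ, -(m : ℤ) ≤ k → k ≤ l → l ≤ (n : ℤ) + m → t k ≤ t l)
    (h0n : t 0 < t n)
    (r : ℤ) (hr1 : 1 ≤ r) (hr2 : r + m ≤ (n : ℤ) - 1) (hr : t r = t (r + m))
    (i : ℤ) (hi1 : -(m : ℤ) ≤ i) (hi2 : i ≤ (n : ℤ) - 1) :
    (∀ u : ℝ, u < t r → bspline t n m i u = 0)
      ∨ (∀ u : ℝ, t r ≤ u → bspline t n m i u = 0) := by
  by_cases hcase : i ≤ r - 1
  · right
    intro u hu
    apply bspline_support_right m n hn t hmono m le_rfl i u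
    calc t (i + m + 1) ≤ t (r + m) := hmono _ _ (by omega) (by omega) (by omega)
      _ = t r := hr.symm
      _ ≤ u := hu
  · left
    intro u hu
    apply bspline_support_left m n hn t hmono m le_rfl i u
    exact lt_of_lt_of_le hu (hmono r i (by omega) (by omega) (by omega))
end

section
/- Fix j with 0 ≤ j ≤ n−1 such that t_j < t_{j+1}. Then the leading adjusted Bernstein–Bézier coefficients of the B-spline functions N_{p,j} over the knot span [t_j, t_{j+1}) satisfy b_{0,0}^{(j,j)} = 1 and, for every p with 1 ≤ p ≤ m, b_{p,p}^{(j,j)} = ((t_{j+1} − t_j)/(t_{j+p} − t_j))·b_{p−1,p−1}^{(j,j)}. -/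
/-!
On the span `[t_j, t_{j+1})` the second term of the de Boor–Cox recursion for `N_{p,j}` vanishes,
since `N_{p-1,j+1}` is zero to the left of `t_{j+1}`. Hence `N_{p,j}(u) = x·α·N_{p-1,j}(u)` with
`x = (u - t_j)/(t_{j+1} - t_j)` and `α = (t_{j+1} - t_j)/(t_{j+p} - t_j)`. In Bézier form both
sides are polynomials in `x`, so the identity extends to `x = 1`, where a Bézier polynomial takes
the value of its last coefficient.
-/

open Set

noncomputable def bezier (p : ℕ) (c : ℕ → ℝ) (x : ℝ) : ℝ :=
  ∑ k ∈ Finset.range (p + 1), c k * bern p k x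

theorem continuous_bezier (p : ℕ) (c : ℕ → ℝ) : Continuous (bezier p c) := by
  unfold bezier bern
  fun_prop

theorem bezier_one (p : ℕ) (c : ℕ → ℝ) : bezier p c 1 = c p := by
  rw [bezier, Finset.sum_eq_single_of_mem p (Finset.self_mem_range_succ p)]
  · simp [bern]
  · intro k hk hkp
    have hlt : k < p := by grind
    simp [bern, Nat.sub_ne_zero_of_lt hlt]

theorem bezier_coeff_eq_of_eqOn_Ico {p : ℕ} {c : ℕ → ℝ} {f : ℝ → ℝ} (hf : Continuous f)
    (h : EqOn (bezier p c) f (Ico 0 1)) : c p = f 1 := by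
  rw [← bezier_one p c]
  exact h.closure (continuous_bezier p c) hf (by simp [closure_Ico zero_ne_one])

section BSpline

variable {t : ℤ → ℝ} {n m : ℕ}

theorem bspline_eq_zero_of_lt (hmono : MonotoneOn t (Icc (-(m : ℤ)) (n + m))) :
    ∀ (p : ℕ) {i : ℤ} {u : ℝ}, -(m : ℤ) ≤ i → u < t i → bspline t n p i u = 0
  | 0, i, u, _, hu => if_neg fun h => (hu.trans_le h.2.2.1).false
  | p + 1, i, u, hi, hu => by
    simp only [bspline]
    split_ifs with h
    · have hti : t i ≤ t (i + 1) := hmono ⟨hi, by omega⟩ ⟨by omega, by omega⟩ (by omega)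
      rw [bspline_eq_zero_of_lt hmono p hi hu,
        bspline_eq_zero_of_lt hmono p (by omega) (hu.trans_le hti)]
      ring
    · rfl

theorem bspline_succ_eq_of_lt (hmono : MonotoneOn t (Icc (-(m : ℤ)) (n + m))) {p : ℕ} {i : ℤ}
    {u : ℝ} (him : -(m : ℤ) ≤ i + 1) (hip : -((p : ℤ) + 1) ≤ i) (hin : i < n)
    (hu : u < t (i + 1)) :
    bspline t n (p + 1) i u = (u - t i) / (t ((p : ℤ) + 1 + i) - t i) * bspline t n p i u := by
  simp only [bspline]
  rw [if_pos ⟨hip, hin⟩, bspline_eq_zero_of_lt hmono p him hu, mul_zero, add_zero]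

end BSpline

theorem bspline_bezier_leading_coeff_init_general
    (m n : ℕ) (t : ℤ → ℝ)
    (hmono : ∀ k l : ℤ, -(m : ℤ) ≤ k → k ≤ l → l ≤ (n : ℤ) + m → t k ≤ t l)
    (j : ℤ) (hj1 : 0 ≤ j) (hj2 : j ≤ (n : ℤ) - 1) (hspan : t j < t (j + 1))
    (b : ℕ → ℕ → ℝ)
    (hb : ∀ p : ℕ, p ≤ m → ∀ u ∈ Set.Ico (t j) (t (j + 1)),
      bspline t n p j u
        = ∑ k ∈ Finset.range (p + 1),
            b p k * bern p k ((u - t j) / (t (j + 1) - t j))) :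
    b 0 0 = 1
      ∧ ∀ p : ℕ, 1 ≤ p → p ≤ m →
          b p p = (t (j + 1) - t j) / (t (j + (p : ℤ)) - t j) * b (p - 1) (p - 1) := by
  have hmono' : MonotoneOn t (Icc (-(m : ℤ)) (n + m)) :=
    fun k hk l hl hkl => hmono k l hk.1 hkl hl.2
  have hd : 0 < t (j + 1) - t j := sub_pos.mpr hspan
  have hpull : ∀ x ∈ Ico (0 : ℝ) 1, t j + x * (t (j + 1) - t j) ∈ Ico (t j) (t (j + 1)) ∧
      (t j + x * (t (j + 1) - t j) - t j) / (t (j + 1) - t j) = x := fun x ⟨hx0, hx1⟩ =>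
    ⟨⟨by nlinarith, by nlinarith⟩, by field_simp; ring⟩
  refine ⟨?_, fun p hp1 hpm => ?_⟩
  · simpa [bspline, bern, hj1, hspan, show j < n by omega] using
      (hb 0 m.zero_le _ ⟨le_rfl, hspan⟩).symm
  obtain ⟨q, rfl⟩ := Nat.exists_eq_add_of_le' hp1
  have hscale : EqOn (bezier (q + 1) (b (q + 1)))
      (fun x => x * ((t (j + 1) - t j) / (t (j + (q + 1 : ℕ)) - t j)) * bezier q (b q) x)
      (Ico 0 1) := by
    intro x hx
    obtain ⟨hu, hux⟩ := hpull x hx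
    have h1 := hb (q + 1) hpm _ hu
    have h2 := hb q (by omega) _ hu
    rw [hux] at h1 h2
    simp only [bezier]
    rw [← h1, ← h2, bspline_succ_eq_of_lt hmono' (by omega) (by omega) (by omega) hu.2]
    rw [show ((q : ℤ) + 1 + j) = j + (q + 1 : ℕ) by push_cast; ring]
    ring
  simpa [bezier_one] using bezier_coeff_eq_of_eqOn_Ico
    ((continuous_id.mul continuous_const).mul (continuous_bezier q (b q))) hscale

/-- the leading adjusted Bernstein–Bézier coefficients of the
B-spline functions `N_{p,j}` over a non-empty knot span `[t_j, t_{j+1})`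
satisfy `b_{0,0}^{(j,j)} = 1` and
`b_{p,p}^{(j,j)} = ((t_{j+1} − t_j)/(t_{j+p} − t_j))·b_{p−1,p−1}^{(j,j)}`
for `1 ≤ p ≤ m`. Here `b p k` denotes `b_{p,k}^{(j,j)}`, characterized by the
Bernstein–Bézier representation of `N_{p,j}` on `[t_j, t_{j+1})`. -/
theorem bspline_bezier_leading_coeff_init
    (m n : ℕ) (hn : 1 ≤ n) (t : ℤ → ℝ)
    (hmono : ∀ k l : ℤ, -(m : ℤ) ≤ k → k ≤ l → l ≤ (n : ℤ) + m → t k ≤ t l)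
    (h0n : t 0 < t n)
    (j : ℤ) (hj1 : 0 ≤ j) (hj2 : j ≤ (n : ℤ) - 1) (hspan : t j < t (j + 1))
    (b : ℕ → ℕ → ℝ)
    (hb : ∀ p : ℕ, p ≤ m → ∀ u ∈ Set.Ico (t j) (t (j + 1)),
      bspline t n p j u
        = ∑ k ∈ Finset.range (p + 1),
            b p k * bern p k ((u - t j) / (t (j + 1) - t j))) :
    b 0 0 = 1
      ∧ ∀ p : ℕ, 1 ≤ p → p ≤ m →
          b p p = (t (j + 1) - t j) / (t (j + (p : ℤ)) - t j) * b (p - 1) (p - 1) :=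
  bspline_bezier_leading_coeff_init_general m n t hmono j hj1 hj2 hspan b hb
end
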